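/- Let Γ be a distance-regular graph of diameter d whose odd girth (the length of its shortest odd cycle) equals 2d + 1. Then the metric dimension of its bipartite double D(Γ) equals the metric dimension of Γ: μ(D(Γ)) = μ(Γ). -/

import Mathlib

open SimpleGraph

/-- `R` is a resolving set for `G`: every pair of distinct vertices is
distinguished by its distances to some vertex of `R`. -/
def IsResolving {V : Type*} (G : SimpleGraph V) (R : Set V) : Prop :=
  ∀ u w : V, u ≠ w → ∃ v ∈ R, G.dist u v ≠ G.dist w v

/-- The metric dimension of `G`: the least size of a resolving set. -/
noncomputable def metricDim {V : Type*} (G : SimpleGraph V) : ℕ :=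
  sInf {n | ∃ R : Set V, IsResolving G R ∧ R.ncard = n}

/-- `G` has diameter `d`. -/
def HasDiam {V : Type*} (G : SimpleGraph V) (d : ℕ) : Prop :=
  (∀ u w : V, G.dist u w ≤ d) ∧ ∃ u w : V, G.dist u w = d

/-- `G` is distance-regular: there are parameters `cᵢ, aᵢ, bᵢ` such that for any
vertices `u, w` at distance `i`, the number of neighbours of `w` at distance
`i-1`, `i`, `i+1` from `u` is `cᵢ`, `aᵢ`, `bᵢ` respectively. -/
def IsDistRegular {V : Type*} (G : SimpleGraph V) : Prop :=
  ∃ c a b : ℕ → ℕ, ∀ (i : ℕ) (u w : V), G.dist u w = i →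
    {x | G.Adj w x ∧ G.dist u x = i - 1}.ncard = c i ∧
    {x | G.Adj w x ∧ G.dist u x = i}.ncard = a i ∧
    {x | G.Adj w x ∧ G.dist u x = i + 1}.ncard = b i

/-- The bipartite double of `G`: vertex set `V × Bool`, with `(u, b)` adjacent to
`(w, c)` iff `b ≠ c` and `u` is adjacent to `w` in `G`. -/
def bipDouble {V : Type*} (G : SimpleGraph V) : SimpleGraph (V × Bool) :=
  SimpleGraph.fromRel (fun p q => p.2 ≠ q.2 ∧ G.Adj p.1 q.1)

/-!
In the bipartite double, a shortest walk from `(u, b)` to `(w, c)` projects to a shortest walk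
from `u` to `w` in `Γ` among those whose length is even iff `b = c`. If the parity is that of
`d(u, w)`, this is `d(u, w)`. Otherwise an odd closed walk through a geodesic shows that it is at
least `2d + 1 - d(u, w)`, and distance regularity gives a walk of exactly this length: walk from
`w` away from `u` until distance `d` (possible as `b_i > 0` for `i < d`), step to a neighbour at
distance `d` (`a_d > 0`: on an odd closed walk of length `2d + 1`, the vertices `d` and `d + 1`
steps along are both at distance `d` from its start) and return to `u` along a geodesic.
So `d((u, b), (v, e))` is `d(u, v) ≤ d` or `2d + 1 - d(u, v) > d`, according to parity: for fixed
`b, e` it determines `d(u, v)` and conversely, and its parity detects whether `b = e`. Hence the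
projection of a resolving set of `D(Γ)` resolves `Γ`, and `R × {+}` resolves `D(Γ)` whenever `R`
resolves `Γ`.
-/

open Walk

section

variable {V : Type*} {G : SimpleGraph V}

namespace SimpleGraph.Walk

theorem exists_eq_append_append_of_not_isPath [DecidableEq V] :
    ∀ {u v : V} (q : G.Walk u v), ¬q.IsPath →
      ∃ (z : V) (a : G.Walk u z) (c : G.Walk z z) (b : G.Walk z v),
        0 < c.length ∧ q = a.append (c.append b)
  | _, _, nil, hq => absurd IsPath.nil hq
  | u, _, cons h q, hq => by
    by_cases hq' : q.IsPath
    · have hu : u ∈ q.support := by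
        by_contra hu
        exact hq (hq'.cons hu)
      exact ⟨u, nil, cons h (q.takeUntil u hu), q.dropUntil u hu, by simp,
        by simp [q.take_spec hu]⟩
    · obtain ⟨z, a, c, b, hc, rfl⟩ := exists_eq_append_append_of_not_isPath q hq'
      exact ⟨z, cons h a, c, b, hc, rfl⟩

theorem exists_isCycle_odd_length_le {x : V} (p : G.Walk x x) (hp : Odd p.length) :
    ∃ (y : V) (c : G.Walk y y), c.IsCycle ∧ Odd c.length ∧ c.length ≤ p.length := by
  classical
  induction hn : p.length using Nat.strong_induction_on generalizing x with
  | _ n ih =>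
  cases p with
  | nil => simp at hp
  | cons h q =>
    by_cases hq : q.IsPath
    · have hq0 : q.length ≠ 0 := fun h0 => h.ne (q.eq_of_length_eq_zero h0).symm
      refine ⟨x, cons h q, isCycle_iff_isPath_tail_and_le_length.mpr ⟨by simpa using hq, ?_⟩,
        hp, hn.le⟩
      rw [length_cons, Nat.odd_add_one, Nat.not_odd_iff_even] at hp
      obtain ⟨k, hk⟩ := hp
      rw [length_cons]
      omega
    · -- Split off a closed subwalk: one of the two shorter closed walks left is odd.
      obtain ⟨z, a, c, b, hc, rfl⟩ := q.exists_eq_append_append_of_not_isPath hq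
      simp only [length_cons, length_append] at hp hn
      rcases Nat.even_or_odd c.length with hce | hco
      · obtain ⟨y, c', hc', hco', hle⟩ := ih _ (by rw [length_cons, length_append]; omega)
          (cons h (a.append b)) (by simpa [parity_simps, hce] using hp) rfl
        exact ⟨y, c', hc', hco', hle.trans (by rw [length_cons, length_append]; omega)⟩
      · obtain ⟨y, c', hc', hco', hle⟩ := ih _ (by omega) c hco rfl
        exact ⟨y, c', hc', hco', by omega⟩

theorem dist_getVert_of_length_eq_dist {u v : V} (p : G.Walk u v) (hp : p.length = G.dist u v)
    {i : ℕ} (hi : i ≤ p.length) : G.dist u (p.getVert i) = i := by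
  have := length_eq_dist_of_subwalk hp (p.isSubwalk_take i)
  rwa [take_length, min_eq_left hi, eq_comm] at this

end SimpleGraph.Walk

/-- `m` is at most the odd girth of `G`, stated for odd closed walks rather than odd cycles. -/
def LeOddGirth (G : SimpleGraph V) (m : ℕ) : Prop :=
  ∀ ⦃x : V⦄ (p : G.Walk x x), Odd p.length → m ≤ p.length

namespace LeOddGirth

variable {m : ℕ}

theorem of_forall_isCycle
    (h : ∀ (x : V) (c : G.Walk x x), c.IsCycle → Odd c.length → m ≤ c.length) :
    LeOddGirth G m := fun _ p hp =>
  let ⟨y, c, hc, hco, hle⟩ := p.exists_isCycle_odd_length_le hp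
  (h y c hc hco).trans hle

theorem le_length_add_dist (hG : LeOddGirth G m) {u v : V} (p : G.Walk u v)
    (hp : ¬(Even p.length ↔ Even (G.dist u v))) : m ≤ p.length + G.dist u v := by
  obtain ⟨g, hg⟩ := p.reachable.exists_walk_length_eq_dist
  have := hG (p.append g.reverse) (by
    rwa [length_append, length_reverse, hg, ← Nat.not_even_iff_odd, Nat.even_add])
  rwa [length_append, length_reverse, hg] at this

theorem le_dist_add_max (hG : LeOddGirth G m) {u v : V} (p q : G.Walk u v)
    (h : Odd (p.length + q.length)) : m ≤ G.dist u v + max p.length q.length := by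
  rw [← Nat.not_even_iff_odd, Nat.even_add] at h
  by_cases hp : Even p.length ↔ Even (G.dist u v)
  · have := hG.le_length_add_dist q (by tauto)
    omega
  · have := hG.le_length_add_dist p hp
    omega

theorem le_dist_getVert_add_max (hG : LeOddGirth G m) {x : V} (c : G.Walk x x)
    (hc : Odd c.length) {j : ℕ} (hj : j ≤ c.length) :
    m ≤ G.dist x (c.getVert j) + max j (c.length - j) := by
  have := hG.le_dist_add_max (c.take j) (c.drop j).reverse
    (by rwa [take_length, length_reverse, drop_length, min_eq_left hj, Nat.add_sub_cancel' hj])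
  rwa [take_length, length_reverse, drop_length, min_eq_left hj] at this

end LeOddGirth

namespace IsDistRegular

variable [Finite V] {d : ℕ}

theorem exists_adj_of_dist_eq (hdr : IsDistRegular G) {u w u' w' x' : V}
    (h : G.dist u' w' = G.dist u w) (hx' : G.Adj w' x')
    (hk : G.dist u' x' = G.dist u' w' ∨ G.dist u' x' = G.dist u' w' + 1) :
    ∃ x, G.Adj w x ∧ G.dist u x = G.dist u' x' := by
  obtain ⟨c, a, b, hcab⟩ := hdr
  have hcard : {x | G.Adj w x ∧ G.dist u x = G.dist u' x'}.ncard =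
      {x | G.Adj w' x ∧ G.dist u' x = G.dist u' x'}.ncard := by
    rcases hk with hk | hk <;> rw [hk, h]
    · exact (hcab _ u w rfl).2.1.trans (hcab _ u' w' h).2.1.symm
    · exact (hcab _ u w rfl).2.2.trans (hcab _ u' w' h).2.2.symm
  have hpos := (Set.ncard_pos (Set.toFinite _)).mpr
    (⟨x', hx', rfl⟩ : {x | G.Adj w' x ∧ G.dist u' x = G.dist u' x'}.Nonempty)
  exact Set.nonempty_of_ncard_ne_zero (hcard ▸ hpos.ne')

theorem exists_adj_dist_succ (hdr : IsDistRegular G) (hconn : G.Preconnected)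
    (hdiam : HasDiam G d) {u w : V} (h : G.dist u w < d) :
    ∃ x, G.Adj w x ∧ G.dist u x = G.dist u w + 1 := by
  obtain ⟨u₀, w₀, h₀⟩ := hdiam.2
  obtain ⟨p, hp⟩ := (hconn u₀ w₀).exists_walk_length_eq_dist
  have hdist {j : ℕ} (hj : j ≤ d) : G.dist u₀ (p.getVert j) = j :=
    p.dist_getVert_of_length_eq_dist hp (by omega)
  rw [← hdist (j := G.dist u w + 1) h]
  exact hdr.exists_adj_of_dist_eq (hdist h.le) (p.adj_getVert_succ (by omega))
    (Or.inr (by rw [hdist h, hdist h.le]))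

theorem exists_walk_of_dist_le (hdr : IsDistRegular G) (hconn : G.Preconnected)
    (hdiam : HasDiam G d) {u w : V} (h : G.dist u w ≤ d) :
    ∃ (z : V) (q : G.Walk w z), q.length + G.dist u w = d ∧ G.dist u z = d := by
  induction hn : d - G.dist u w generalizing w with
  | zero => exact ⟨w, nil, by rw [length_nil]; omega, by omega⟩
  | succ n ih =>
    obtain ⟨x, hwx, hx⟩ := hdr.exists_adj_dist_succ hconn hdiam (u := u) (w := w) (by omega)
    obtain ⟨z, q, hq, hz⟩ := ih (w := x) (by omega) (by omega)
    exact ⟨z, cons hwx q, by rw [length_cons]; omega, hz⟩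

end IsDistRegular

theorem bipDouble_adj {P Q : V × Bool} :
    (bipDouble G).Adj P Q ↔ P.2 ≠ Q.2 ∧ G.Adj P.1 Q.1 := by
  simp only [bipDouble, fromRel_adj]
  constructor
  · rintro ⟨-, h | h⟩
    · exact h
    · exact ⟨h.1.symm, h.2.symm⟩
  · exact fun h => ⟨fun hPQ => h.1 (congrArg Prod.snd hPQ), Or.inl h⟩

variable (G) in
def bipDoubleFst : bipDouble G →g G where
  toFun := Prod.fst
  map_rel' h := (bipDouble_adj.mp h).2

theorem bipDoubleFst_apply (P : V × Bool) : bipDoubleFst G P = P.1 := rfl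

variable (G) in
def bipDoubleColoring : (bipDouble G).Coloring Bool :=
  Coloring.mk Prod.snd fun h => (bipDouble_adj.mp h).1

theorem SimpleGraph.Walk.exists_bipDouble_walk_length_eq :
    ∀ {u w : V} (q : G.Walk u w) {b c : Bool}, (b = c ↔ Even q.length) →
      ∃ p : (bipDouble G).Walk (u, b) (w, c), p.length = q.length
  | _, _, nil, b, c, h => by
    obtain rfl : b = c := h.mpr (by simp)
    exact ⟨nil, rfl⟩
  | _, _, cons hadj q, b, c, h => by
    obtain ⟨p, hp⟩ := q.exists_bipDouble_walk_length_eq (b := !b) (c := c) (by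
      rw [length_cons, Nat.even_add_one] at h
      cases b <;> cases c <;> simp_all)
    exact ⟨cons (bipDouble_adj.mpr ⟨by simp, hadj⟩) p, by simp [hp]⟩

theorem dist_bipDouble_eq_of_forall_length_le {u w : V} {b c : Bool} (q : G.Walk u w)
    (hq : b = c ↔ Even q.length)
    (hmin : ∀ q' : G.Walk u w, (b = c ↔ Even q'.length) → q.length ≤ q'.length) :
    (bipDouble G).dist (u, b) (w, c) = q.length := by
  obtain ⟨p, hp⟩ := q.exists_bipDouble_walk_length_eq hq
  obtain ⟨p₀, hp₀⟩ := p.reachable.exists_walk_length_eq_dist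
  refine le_antisymm (hp ▸ dist_le p) ?_
  have hproj := hmin ((p₀.map (bipDoubleFst G)).copy (bipDoubleFst_apply _)
    (bipDoubleFst_apply _)) (by
    rw [length_copy, length_map, (bipDoubleColoring G).even_length_iff_congr p₀]
    exact Bool.eq_iff_iff)
  rwa [length_copy, length_map, hp₀] at hproj

theorem dist_bipDouble_of_even_iff (hconn : G.Preconnected) {u w : V} {b c : Bool}
    (h : b = c ↔ Even (G.dist u w)) : (bipDouble G).dist (u, b) (w, c) = G.dist u w := by
  obtain ⟨g, hg⟩ := (hconn u w).exists_walk_length_eq_dist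
  rw [← hg] at h ⊢
  exact dist_bipDouble_eq_of_forall_length_le g h fun q' _ => hg ▸ dist_le q'

/-- A distance-regular graph of diameter `d` and odd girth `2d + 1`. -/
structure IsGeneralizedOddGraph (G : SimpleGraph V) (d : ℕ) : Prop where
  connected : G.Connected
  isDistRegular : IsDistRegular G
  hasDiam : HasDiam G d
  exists_walk : ∃ (x : V) (c : G.Walk x x), c.length = 2 * d + 1
  leOddGirth : LeOddGirth G (2 * d + 1)

namespace IsGeneralizedOddGraph

variable {d : ℕ}

theorem nontrivial (hG : IsGeneralizedOddGraph G d) : Nontrivial V := by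
  obtain ⟨x, c, hc⟩ := hG.exists_walk
  have hnil : ¬c.Nil := by simp [← length_eq_zero_iff, hc]
  exact ⟨x, c.snd, (c.adj_snd hnil).ne⟩

variable [Finite V]

theorem exists_adj_dist_eq_diam (hG : IsGeneralizedOddGraph G d) {u w : V}
    (h : G.dist u w = d) : ∃ x, G.Adj w x ∧ G.dist u x = d := by
  obtain ⟨x, c, hc⟩ := hG.exists_walk
  have hdist {j : ℕ} (hj : d ≤ j) (hj' : j ≤ d + 1) : G.dist x (c.getVert j) = d := by
    have := hG.leOddGirth.le_dist_getVert_add_max c (hc ▸ odd_two_mul_add_one d) (j := j)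
      (by omega)
    have := hG.hasDiam.1 x (c.getVert j)
    omega
  have hd := hdist le_rfl le_self_add
  have hd₁ := hdist le_self_add le_rfl
  obtain ⟨y, hwy, hy⟩ := hG.isDistRegular.exists_adj_of_dist_eq (hd.trans h.symm)
    (c.adj_getVert_succ (by omega)) (Or.inl (hd₁.trans hd.symm))
  exact ⟨y, hwy, hy.trans hd₁⟩

theorem exists_walk_length_add_dist_eq (hG : IsGeneralizedOddGraph G d) (u w : V) :
    ∃ p : G.Walk u w, p.length + G.dist u w = 2 * d + 1 := by
  obtain ⟨z, q, hq, hz⟩ := hG.isDistRegular.exists_walk_of_dist_le hG.connected.preconnected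
    hG.hasDiam (hG.hasDiam.1 u w)
  obtain ⟨z', hzz', hz'⟩ := hG.exists_adj_dist_eq_diam hz
  obtain ⟨g, hg⟩ := hG.connected.exists_walk_length_eq_dist u z'
  exact ⟨g.append (cons hzz'.symm q.reverse), by
    rw [length_append, length_cons, length_reverse, hg, hz']
    omega⟩

theorem dist_bipDouble_of_not_even_iff (hG : IsGeneralizedOddGraph G d) {u w : V} {b c : Bool}
    (h : ¬(b = c ↔ Even (G.dist u w))) :
    (bipDouble G).dist (u, b) (w, c) = 2 * d + 1 - G.dist u w := by
  obtain ⟨p, hp⟩ := hG.exists_walk_length_add_dist_eq u w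
  have hpar : b = c ↔ Even p.length := by
    have := Nat.not_even_two_mul_add_one d
    rw [← hp, Nat.even_add] at this
    tauto
  rw [dist_bipDouble_eq_of_forall_length_le p hpar fun q hq => ?_]
  · omega
  · have := hG.leOddGirth.le_length_add_dist q (by tauto)
    omega

theorem dist_bipDouble (hG : IsGeneralizedOddGraph G d) (u w : V) (b c : Bool) :
    (bipDouble G).dist (u, b) (w, c) =
      if b = c ↔ Even (G.dist u w) then G.dist u w else 2 * d + 1 - G.dist u w := by
  split_ifs with h
  · exact dist_bipDouble_of_even_iff hG.connected.preconnected h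
  · exact hG.dist_bipDouble_of_not_even_iff h

theorem even_dist_bipDouble_iff (hG : IsGeneralizedOddGraph G d) (u w : V) (b c : Bool) :
    Even ((bipDouble G).dist (u, b) (w, c)) ↔ b = c := by
  rw [hG.dist_bipDouble]
  split_ifs with h
  · exact h.symm
  · rw [Nat.even_sub (by have := hG.hasDiam.1 u w; omega)]
    have := Nat.not_even_two_mul_add_one d
    tauto

theorem dist_bipDouble_eq_dist_bipDouble_iff (hG : IsGeneralizedOddGraph G d) (u w v : V)
    (b e : Bool) :
    (bipDouble G).dist (u, b) (v, e) = (bipDouble G).dist (w, b) (v, e) ↔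
      G.dist u v = G.dist w v := by
  have := hG.hasDiam.1 u v
  have := hG.hasDiam.1 w v
  rw [hG.dist_bipDouble, hG.dist_bipDouble]
  refine ⟨fun h => ?_, fun h => by rw [h]⟩
  split_ifs at h <;> omega

theorem isResolving_image_fst (hG : IsGeneralizedOddGraph G d) {S : Set (V × Bool)}
    (hS : IsResolving (bipDouble G) S) : IsResolving G (Prod.fst '' S) := by
  intro u w huw
  obtain ⟨⟨v, e⟩, hv, hne⟩ := hS (u, true) (w, true) (by simpa using huw)
  exact ⟨v, ⟨_, hv, rfl⟩, fun h =>
    hne ((hG.dist_bipDouble_eq_dist_bipDouble_iff u w v _ e).mpr h)⟩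

theorem isResolving_image_mk (hG : IsGeneralizedOddGraph G d) {R : Set V}
    (hR : IsResolving G R) : IsResolving (bipDouble G) ((·, true) '' R) := by
  rintro ⟨u, b⟩ ⟨w, c⟩ huw
  by_cases hbc : b = c
  · subst hbc
    obtain ⟨v, hv, hne⟩ := hR u w (by rintro rfl; exact huw rfl)
    exact ⟨(v, true), ⟨v, hv, rfl⟩, fun h =>
      hne ((hG.dist_bipDouble_eq_dist_bipDouble_iff u w v b true).mp h)⟩
  · have := hG.nontrivial
    obtain ⟨a, a', ha⟩ := exists_pair_ne V
    obtain ⟨v, hv, -⟩ := hR a a' ha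
    refine ⟨(v, true), ⟨v, hv, rfl⟩, fun h => hbc ?_⟩
    have hb := hG.even_dist_bipDouble_iff u v b true
    have hc := hG.even_dist_bipDouble_iff w v c true
    rw [h, hc] at hb
    cases b <;> cases c <;> simp_all

end IsGeneralizedOddGraph

theorem isResolving_univ (hG : G.Preconnected) : IsResolving G Set.univ := fun u w huw =>
  ⟨u, trivial, by rw [dist_self]; exact ((hG w u).pos_dist_of_ne huw.symm).ne⟩

theorem metricDim_le_of_forall_isResolving {W : Type*} {H : SimpleGraph W}
    (hG : ∃ R, IsResolving G R)
    (h : ∀ R, IsResolving G R → ∃ S, IsResolving H S ∧ S.ncard ≤ R.ncard) :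
    metricDim H ≤ metricDim G := by
  unfold metricDim
  obtain ⟨R₀, hR₀⟩ := hG
  obtain ⟨R, hR, hcard⟩ := Nat.sInf_mem
    (s := {n | ∃ R : Set V, IsResolving G R ∧ R.ncard = n}) ⟨_, R₀, hR₀, rfl⟩
  obtain ⟨S, hS, hSR⟩ := h R hR
  calc sInf {n | ∃ S : Set W, IsResolving H S ∧ S.ncard = n}
      _ ≤ S.ncard := Nat.sInf_le ⟨S, hS, rfl⟩
      _ ≤ R.ncard := hSR
      _ = _ := hcard

theorem IsGeneralizedOddGraph.metricDim_bipDouble [Finite V] {d : ℕ}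
    (hG : IsGeneralizedOddGraph G d) : metricDim (bipDouble G) = metricDim G := by
  have hres := isResolving_univ hG.connected.preconnected
  apply le_antisymm
  · refine metricDim_le_of_forall_isResolving ⟨_, hres⟩ fun R hR => ?_
    exact ⟨_, hG.isResolving_image_mk hR,
        (Set.ncard_image_of_injective R (Prod.mk_left_injective true)).le⟩
  · refine metricDim_le_of_forall_isResolving ⟨_, hG.isResolving_image_mk hres⟩ fun S hS => ?_
    exact ⟨_, hG.isResolving_image_fst hS, Set.ncard_image_le S.toFinite⟩

end

/-- if `G` is a distance-regular graph of diameter `d` whose odd girth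
(the length of a shortest odd cycle) is `2d + 1`, then the metric dimension of the
bipartite double `D(G)` equals that of `G`. -/
theorem stmt10 {V : Type*} [Fintype V] (G : SimpleGraph V) (d : ℕ)
    (hconn : G.Connected) (hdr : IsDistRegular G) (hdiam : HasDiam G d)
    (hodd₁ : ∃ (x : V) (w : G.Walk x x), w.IsCycle ∧ w.length = 2 * d + 1)
    (hodd₂ : ∀ (x : V) (w : G.Walk x x), w.IsCycle → Odd w.length →
      2 * d + 1 ≤ w.length) :
    metricDim (bipDouble G) = metricDim G := by
  obtain ⟨x, c, -, hc⟩ := hodd₁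
  exact IsGeneralizedOddGraph.metricDim_bipDouble
    ⟨hconn, hdr, hdiam, ⟨x, c, hc⟩, LeOddGirth.of_forall_isCycle hodd₂⟩
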